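/- (McMillan inequality) Let C be a finite uniquely decodable code over an alphabet of size k ≥ 2. Then ∑_{w ∈ C} k^{-|w|} ≤ 1. -/

import Mathlib

/-!
Let `S = ∑_{w ∈ C} k^{-|w|}` and `L` the maximal length of a codeword. Expanding `S^n` gives a
sum over `n`-tuples of codewords, which we group by their total length `m ≤ n L`. Unique
decodability makes concatenation injective on tuples, so at most `k^m` tuples have total length
`m` and each group contributes at most `1`. Hence `S^n ≤ n L + 1` for every `n`: `S^n` grows at
most linearly, so `S ≤ 1`.
-/

def UniquelyDecodable {α : Type*} (C : Finset (List α)) : Prop :=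
  ∀ l₁ l₂ : List (List α), (∀ w ∈ l₁, w ∈ C) → (∀ w ∈ l₂, w ∈ C) →
    l₁.flatten = l₂.flatten → l₁ = l₂

open Finset Filter Topology

lemma le_one_of_forall_pow_le_linear {x a b : ℝ} (h : ∀ n : ℕ, x ^ n ≤ n * a + b) :
    x ≤ 1 := by
  by_contra! hx
  have hlim : Tendsto (fun n : ℕ => (n * a + b) / x ^ n) atTop (𝓝 0) := by
    have hlin := (tendsto_pow_const_div_const_pow_of_one_lt 1 hx).const_mul a
    have hconst := (tendsto_pow_const_div_const_pow_of_one_lt 0 hx).const_mul b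
    have h := hlin.add hconst
    rw [mul_zero, mul_zero, add_zero] at h
    refine h.congr fun n => ?_
    ring
  have hge : ∀ n : ℕ, 1 ≤ (n * a + b) / x ^ n := fun n =>
    (one_le_div (by positivity)).2 (h n)
  exact absurd (ge_of_tendsto' hlim hge) (by norm_num)

theorem pow_sum_pow_length_eq {α R : Type*} [CommSemiring R] (C : Finset (List α)) (r : R)
    (n : ℕ) :
    (∑ w ∈ C, r ^ w.length) ^ n =
      ∑ f ∈ Fintype.piFinset fun _ : Fin n => C, r ^ ∑ i, (f i).length := by
  rw [← Fin.prod_const, prod_univ_sum]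
  simp only [prod_pow_eq_pow_sum]

section

variable {α : Type*}

theorem UniquelyDecodable.injOn_flatten_ofFn {C : Finset (List α)} (hC : UniquelyDecodable C)
    (n : ℕ) :
    Set.InjOn (fun f : Fin n → List α => (List.ofFn f).flatten)
      ((Fintype.piFinset fun _ => C : Finset (Fin n → List α)) : Set (Fin n → List α)) := by
  intro f hf g hg hfg
  refine List.ofFn_injective (hC _ _ ?_ ?_ hfg)
  · simpa [List.mem_ofFn] using hf
  · simpa [List.mem_ofFn] using hg

theorem card_le_of_forall_length_eq [Fintype α] {T : Finset (List α)} {m : ℕ}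
    (hT : ∀ l ∈ T, l.length = m) : #T ≤ Fintype.card α ^ m := by
  calc #T ≤ #((univ : Finset (List.Vector α m)).map
          ⟨List.Vector.toList, List.Vector.toList_injective⟩) :=
        card_le_card fun l hl => mem_map.2 ⟨⟨l, hT l hl⟩, mem_univ _, rfl⟩
    _ = Fintype.card α ^ m := by rw [card_map, card_univ, card_vector]

theorem UniquelyDecodable.card_filter_sum_length_eq_le [Fintype α] {C : Finset (List α)}
    (hC : UniquelyDecodable C) (n m : ℕ) :
    #{f ∈ Fintype.piFinset (fun _ : Fin n => C) | ∑ i, (f i).length = m} ≤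
      Fintype.card α ^ m := by
  classical
  rw [← card_image_of_injOn ((hC.injOn_flatten_ofFn n).mono (coe_subset.2 (filter_subset _ _)))]
  refine card_le_of_forall_length_eq fun l hl => ?_
  obtain ⟨f, hf, rfl⟩ := mem_image.1 hl
  simpa [List.length_flatten, List.sum_ofFn] using (mem_filter.1 hf).2

theorem UniquelyDecodable.pow_sum_inv_pow_length_le [Fintype α] {C : Finset (List α)}
    (hC : UniquelyDecodable C) (n : ℕ) :
    (∑ w ∈ C, ((Fintype.card α : ℝ)⁻¹) ^ w.length) ^ n ≤ n * C.sup List.length + 1 := by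
  set k : ℝ := (Fintype.card α : ℝ)
  set P := Fintype.piFinset fun _ : Fin n => C
  have fiber_le (m : ℕ) : #{f ∈ P | ∑ i, (f i).length = m} • k⁻¹ ^ m ≤ 1 := by
    have hcard : (#{f ∈ P | ∑ i, (f i).length = m} : ℝ) ≤ k ^ m :=
      (Nat.cast_le.2 (hC.card_filter_sum_length_eq_le n m)).trans_eq (Nat.cast_pow _ _)
    calc #{f ∈ P | ∑ i, (f i).length = m} • k⁻¹ ^ m ≤ k ^ m * k⁻¹ ^ m := by
          rw [nsmul_eq_mul]; gcongr
      _ = (k * k⁻¹) ^ m := (mul_pow _ _ _).symm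
      _ ≤ 1 := pow_le_one₀ (by positivity) mul_inv_le_one
  have image_subset :
      P.image (fun f => ∑ i, (f i).length) ⊆ range (n * C.sup List.length + 1) := by
    intro m hm
    obtain ⟨f, hf, rfl⟩ := mem_image.1 hm
    rw [mem_range, Nat.lt_succ_iff]
    calc ∑ i, (f i).length ≤ ∑ _i : Fin n, C.sup List.length :=
          sum_le_sum fun i _ => le_sup (Fintype.mem_piFinset.1 hf i)
      _ = n * C.sup List.length := by simp
  rw [pow_sum_pow_length_eq, sum_comp]
  calc _ ≤ ∑ _m ∈ P.image (fun f => ∑ i, (f i).length), (1 : ℝ) :=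
        sum_le_sum fun m _ => fiber_le m
    _ ≤ #(range (n * C.sup List.length + 1)) := by
          rw [sum_const, nsmul_one]; exact_mod_cast card_le_card image_subset
    _ = n * C.sup List.length + 1 := by simp

end

theorem stmt_4_general {α : Type*} [Fintype α]
    (k : ℕ) (hk : Fintype.card α = k)
    (C : Finset (List α))
    (hud : UniquelyDecodable C) :
    ∑ w ∈ C, ((k : ℝ) ^ w.length)⁻¹ ≤ 1 := by
  subst hk
  simp_rw [← inv_pow]
  exact le_one_of_forall_pow_le_linear hud.pow_sum_inv_pow_length_le

theorem stmt_4 {α : Type*} [Fintype α] [DecidableEq α]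
    (k : ℕ) (hk : Fintype.card α = k) (hk2 : 2 ≤ k)
    (C : Finset (List α))
    (hne : ∀ w ∈ C, w ≠ [])
    (hud : UniquelyDecodable C) :
    ∑ w ∈ C, ((k : ℝ) ^ w.length)⁻¹ ≤ 1 :=
  stmt_4_general k hk C hud
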